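/- arXiv:1611.07887 — 2 statements merged into one kernel-verified Lean document; each statement's English description precedes it below -/
import Mathlib

section
/- (Propagation soundness of the proof-constraint) Let γ ≥ 0 be a dual ray certificate for local bounds [l', u'], i.e., Δ(γ^T A, l', u') < γ^T b. Then for the constraint a^T x ≥ β with a = γ^T A and β = γ^T b: every globally feasible integer point x (A x ≥ b, l ≤ x ≤ u, x_I integral) satisfies a^T x ≥ β, yet no point in the local box [l', u'] satisfies it; hence no globally feasible point lies in [l', u']. -/
open Matrix

/-- Maximal activity of the row `a` over the box `[l, u]`. -/
noncomputable def maxAct {n : ℕ} (a l u : Fin n → ℝ) : ℝ :=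
  ∑ i, if 0 < a i then a i * u i else if a i < 0 then a i * l i else 0

theorem proof_constraint_propagation_sound {m n : ℕ}
    (A : Matrix (Fin m) (Fin n) ℝ) (b : Fin m → ℝ)
    (l u l' u' : Fin n → ℝ)
    (hll' : l ≤ l') (hl'u' : l' ≤ u') (hu'u : u' ≤ u)
    (I : Finset (Fin n))
    (γ : Fin m → ℝ) (hγ : 0 ≤ γ)
    (hcert : maxAct (A.vecMul γ) l' u' < γ ⬝ᵥ b) :
    (∀ x : Fin n → ℝ, b ≤ A.mulVec x → l ≤ x → x ≤ u →
        (∀ i ∈ I, ∃ z : ℤ, x i = (z : ℝ)) →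
        γ ⬝ᵥ b ≤ A.vecMul γ ⬝ᵥ x) ∧
    (∀ x : Fin n → ℝ, l' ≤ x → x ≤ u' → ¬ (γ ⬝ᵥ b ≤ A.vecMul γ ⬝ᵥ x)) ∧
    (∀ x : Fin n → ℝ, b ≤ A.mulVec x → l ≤ x → x ≤ u →
        (∀ i ∈ I, ∃ z : ℤ, x i = (z : ℝ)) →
        ¬ (l' ≤ x ∧ x ≤ u')) := by
  have h1 : ∀ x : Fin n → ℝ, b ≤ A.mulVec x → γ ⬝ᵥ b ≤ A.vecMul γ ⬝ᵥ x := by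
    intro x hx
    rw [← Matrix.dotProduct_mulVec]
    unfold dotProduct
    exact Finset.sum_le_sum fun i _ => mul_le_mul_of_nonneg_left (hx i) (hγ i)
  have h2 : ∀ x : Fin n → ℝ, l' ≤ x → x ≤ u' → ¬ (γ ⬝ᵥ b ≤ A.vecMul γ ⬝ᵥ x) := by
    intro x hl hu hle
    have : A.vecMul γ ⬝ᵥ x ≤ maxAct (A.vecMul γ) l' u' := by
      unfold dotProduct maxAct
      refine Finset.sum_le_sum fun i _ => ?_
      set a := A.vecMul γ i with ha
      split_ifs with h h'
      · exact mul_le_mul_of_nonneg_left (hu i) h.le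
      · exact mul_le_mul_of_nonpos_left (hl i) h'.le
      · have : a = 0 := le_antisymm (not_lt.mp h) (not_lt.mp h')
        simp [this]
    linarith
  refine ⟨fun x hx _ _ _ => h1 x hx, h2, fun x hx _ _ _ ⟨hl, hu⟩ => h2 x hl hu (h1 x hx)⟩
end

section
/- (Integer bound rounding) If every feasible x satisfies a^T x ≥ β with a_i > 0, variable i is required to be integral, and the bound-tightening value is t = (β − Δ_i(a, l, u)) / a_i, then every feasible integral-in-coordinate-i point x in the box [l, u] satisfies x_i ≥ ⌈t⌉. -/
open Matrix

/-- Maximal activity residual, omitting coordinate `i`. -/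
noncomputable def maxActRes {n : ℕ} (a l u : Fin n → ℝ) (i : Fin n) : ℝ :=
  ∑ j ∈ Finset.univ.erase i,
    if 0 < a j then a j * u j else if a j < 0 then a j * l j else 0

theorem integer_bound_rounding {n : ℕ} (a l u : Fin n → ℝ) (β : ℝ)
    (hlu : l ≤ u) (i : Fin n) (hai : 0 < a i) :
    ∀ x : Fin n → ℝ, β ≤ a ⬝ᵥ x → l ≤ x → x ≤ u →
      (∃ z : ℤ, x i = (z : ℝ)) →
      (⌈(β - maxActRes a l u i) / a i⌉ : ℝ) ≤ x i := by
  intro x hβ hl hu ⟨z, hz⟩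
  have hsum : a ⬝ᵥ x = a i * x i + ∑ j ∈ Finset.univ.erase i, a j * x j := by
    rw [dotProduct, ← Finset.add_sum_erase _ _ (Finset.mem_univ i)]
  have hres : ∑ j ∈ Finset.univ.erase i, a j * x j ≤ maxActRes a l u i := by
    apply Finset.sum_le_sum
    intro j _
    by_cases h1 : 0 < a j
    · simp only [if_pos h1]
      exact mul_le_mul_of_nonneg_left (hu j) h1.le
    · simp only [if_neg h1]
      by_cases h2 : a j < 0
      · simp only [if_pos h2]
        exact mul_le_mul_of_nonpos_left (hl j) h2.le
      · simp only [if_neg h2]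
        have : a j = 0 := le_antisymm (not_lt.1 h1) (not_lt.1 h2)
        simp [this]
  have key : (β - maxActRes a l u i) / a i ≤ x i := by
    rw [div_le_iff₀ hai] at *
    nlinarith [hβ, hres, hsum]
  rw [hz] at key ⊢
  exact_mod_cast Int.ceil_le.mpr (by exact_mod_cast key)
end
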